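/- A graph G is tough (i.e. deleting any finite set of vertices leaves only finitely many components) if and only if G has no critical vertex set. -/
import Mathlib


open SimpleGraph Set

variable {V : Type*}

/-- The set of components of `G - X` (the subgraph of `G` induced on `Xᶜ`). -/
abbrev Comps (G : SimpleGraph V) (X : Set V) := (G.induce Xᶜ).ConnectedComponent

/-- The vertex set (in `V`) of a component of `G - X`. -/
def suppV (G : SimpleGraph V) (X : Set V) (C : Comps G X) : Set V :=
  Subtype.val '' {v | (G.induce Xᶜ).connectedComponentMk v = C}

/-- The neighbourhood `N(C) ⊆ X` of a component `C` of `G - X`. -/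
def nbhd (G : SimpleGraph V) (X : Set V) (C : Comps G X) : Set V :=
  {x ∈ X | ∃ v ∈ suppV G X C, G.Adj x v}

/-- `C_X(Y)`: the components of `G - X` with neighbourhood exactly `Y`. -/
def compsWithNbhd (G : SimpleGraph V) (X Y : Set V) : Set (Comps G X) :=
  {C | nbhd G X C = Y}

/-- A finite vertex set `Y` is critical if `C_Y(Y)` is infinite. -/
def Critical (G : SimpleGraph V) (Y : Set V) : Prop :=
  Y.Finite ∧ (compsWithNbhd G Y Y).Infinite

lemma mem_suppV {G : SimpleGraph V} {X : Set V} {C : Comps G X} {v : ↥(Xᶜ)} :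
    (v : V) ∈ suppV G X C ↔ (G.induce Xᶜ).connectedComponentMk v = C := by
  constructor
  · rintro ⟨w, hw, hwv⟩
    rwa [Subtype.val_injective hwv] at hw
  · intro h
    exact ⟨v, h, rfl⟩

/-- walking in `G - Y` from a vertex of a component `C` of `G - X` with
`N(C) = Y` stays inside `C`. -/
lemma walk_suppV {G : SimpleGraph V} {X Y : Set V} {C : Comps G X}
    (hC : nbhd G X C = Y) {a b : ↥(Yᶜ)} (p : (G.induce Yᶜ).Walk a b)
    (ha : (a : V) ∈ suppV G X C) : (b : V) ∈ suppV G X C := by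
  induction p with
  | nil => exact ha
  | @cons u w b h p ih =>
    apply ih
    obtain ⟨u', hu', huv⟩ := ha
    have hGadj : G.Adj (u : V) (w : V) := h
    have hwX : (w : V) ∉ X := by
      intro hwX
      apply w.2
      have hmem : (w : V) ∈ nbhd G X C := ⟨hwX, (u : V), ⟨u', hu', huv⟩, hGadj.symm⟩
      rwa [hC] at hmem
    refine ⟨⟨w, hwX⟩, ?_, rfl⟩
    have hadj : (G.induce Xᶜ).Adj u' ⟨w, hwX⟩ := by
      simpa [huv] using hGadj
    rw [← hu']
    exact (SimpleGraph.ConnectedComponent.connectedComponentMk_eq_of_adj hadj).symm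

lemma suppV_map {G : SimpleGraph V} {X Y : Set V} (hYX : Y ⊆ X) {C : Comps G X}
    (hC : nbhd G X C = Y) :
    suppV G Y (C.map (G.induceHomOfLE (compl_le_compl hYX : (Xᶜ : Set V) ≤ Yᶜ)).toHom)
      = suppV G X C := by
  set φ := (G.induceHomOfLE (compl_le_compl hYX : (Xᶜ : Set V) ≤ Yᶜ)).toHom with hφ
  ext w
  constructor
  · rintro ⟨w', hw', rfl⟩
    obtain ⟨v, rfl⟩ := C.exists_rep
    have hw'' : (G.induce Yᶜ).connectedComponentMk w'
        = (G.induce Yᶜ).connectedComponentMk (φ v) :=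
      hw'.trans (SimpleGraph.ConnectedComponent.map_mk φ v)
    obtain ⟨p⟩ := (SimpleGraph.ConnectedComponent.eq.mp hw'').symm
    refine walk_suppV hC p ?_
    exact mem_suppV.mpr rfl
  · rintro ⟨v, hv, rfl⟩
    have hvY : (v : V) ∈ (Yᶜ : Set V) := fun h => v.2 (hYX h)
    refine ⟨⟨v, hvY⟩, ?_, rfl⟩
    have : φ v = ⟨(v : V), hvY⟩ := rfl
    rw [Set.mem_setOf_eq, ← this, ← hv]
    exact (SimpleGraph.ConnectedComponent.map_mk φ v).symm

lemma nbhd_map {G : SimpleGraph V} {X Y : Set V} (hYX : Y ⊆ X) {C : Comps G X}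
    (hC : nbhd G X C = Y) :
    nbhd G Y (C.map (G.induceHomOfLE (compl_le_compl hYX : (Xᶜ : Set V) ≤ Yᶜ)).toHom) = Y := by
  ext x
  rw [nbhd, Set.mem_setOf_eq, suppV_map hYX hC]
  constructor
  · exact fun h => h.1
  · intro hx
    refine ⟨hx, ?_⟩
    have : x ∈ nbhd G X C := hC ▸ hx
    exact this.2

/-- `G` is tough iff `G` has no critical vertex set. -/
theorem stmt5 (G : SimpleGraph V) :
    (∀ X : Set V, X.Finite → Finite (Comps G X)) ↔
      ∀ Y : Set V, ¬ Critical G Y := by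
  constructor
  · rintro h Y ⟨hYfin, hinf⟩
    have := h Y hYfin
    exact hinf (Set.toFinite _)
  · intro h X hX
    by_contra hfin
    rw [not_finite_iff_infinite] at hfin
    have hpow : ({t | t ⊆ X} : Set (Set V)).Finite := hX.finite_subsets
    have : Finite ↥({t | t ⊆ X} : Set (Set V)) := hpow
    obtain ⟨⟨Y, hYX⟩, hfib⟩ := Finite.exists_infinite_fiber
      (fun C : Comps G X => (⟨nbhd G X C, fun x hx => hx.1⟩ : ↥({t | t ⊆ X} : Set (Set V))))
    apply h Y
    refine ⟨hX.subset hYX, ?_⟩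
    rw [Set.infinite_coe_iff] at hfib
    have hfib' : ∀ C : Comps G X, C ∈ {C | nbhd G X C = Y} ↔
        C ∈ (fun C : Comps G X => (⟨nbhd G X C, fun x hx => hx.1⟩ :
          ↥({t | t ⊆ X} : Set (Set V)))) ⁻¹' {⟨Y, hYX⟩} := by
      intro C
      simp [Subtype.ext_iff]
    have hXYinf : (compsWithNbhd G X Y).Infinite := by
      rw [compsWithNbhd, Set.ext hfib']
      exact hfib
    -- map into compsWithNbhd G Y Y injectively
    set φ := (G.induceHomOfLE (compl_le_compl hYX : (Xᶜ : Set V) ≤ Yᶜ)).toHom with hφ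
    apply Set.Infinite.mono (s := SimpleGraph.ConnectedComponent.map φ '' compsWithNbhd G X Y)
    · rintro _ ⟨C, hC, rfl⟩
      exact nbhd_map hYX hC
    · apply Set.Infinite.image ?_ hXYinf
      rintro C₁ hC₁ C₂ hC₂ heq
      have h1 : suppV G X C₁ = suppV G X C₂ := by
        rw [← suppV_map hYX hC₁, ← suppV_map hYX hC₂, heq]
      obtain ⟨v, rfl⟩ := C₁.exists_rep
      have : (v : V) ∈ suppV G X C₂ := h1 ▸ mem_suppV.mpr rfl
      exact mem_suppV.mp this
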